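/- If for all s ∈ [0,t] and all ξ the derivative x_s'(ξ) = 1 + f''(h(ξ))·h'(ξ)·s is positive, then the formula u(x_t(ξ), t) = h(ξ) gives a well-defined C¹ classical solution of u_t + f(u)_x = 0 on ℝ × (0,t) with u(·,0) = h, where x_t(ξ) = ξ + f'(h(ξ))·t. -/

import Mathlib

/-!
For each time `s` the characteristic map `ξ ↦ ξ + f'(h ξ) s` is strictly increasing, its derivative
being `1 + f''(h ξ) h'(ξ) s > 0`, and stays within bounded distance of the identity because `h` has
compact support; so it is a bijection, and its inverse `ξ*(x, s)` is `C¹` in `(x, s)` by the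
implicit function theorem. Differentiating `ξ* + f'(h ξ*) s = x` in `s` and in `x` shows that `ξ*`
solves the transport equation `ξ*_s + f'(h ξ*) ξ*_x = 0`, and then `u = h ∘ ξ*` satisfies
`u_t + f(u)_x = h'(ξ*) (ξ*_s + f'(h ξ*) ξ*_x) = 0` by the chain rule.
-/

open Set Function Filter Topology

section Characteristics

variable {a : ℝ → ℝ}

lemma strictMono_add_mul_of_one_add_deriv_mul_pos (ha : Differentiable ℝ a) {s : ℝ}
    (hpos : ∀ ξ, 0 < 1 + deriv a ξ * s) : StrictMono fun ξ => ξ + a ξ * s :=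
  strictMono_of_deriv_pos fun ξ => by
    have hderiv : HasDerivAt (fun ξ => ξ + a ξ * s) (1 + deriv a ξ * s) ξ :=
      (hasDerivAt_id' ξ).add ((ha ξ).hasDerivAt.mul_const s)
    exact hderiv.deriv ▸ hpos ξ

lemma surjective_add_mul_of_isBounded_range (ha : Continuous a)
    (hb : Bornology.IsBounded (range a)) (s : ℝ) : Surjective fun ξ => ξ + a ξ * s := by
  obtain ⟨C, hC⟩ := hb.exists_norm_le
  have hdev : ∀ ξ, |a ξ * s| ≤ C * |s| := fun ξ => by
    rw [abs_mul]
    gcongr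
    exact hC _ (mem_range_self ξ)
  refine Continuous.surjective (f := fun ξ => ξ + a ξ * s) (by fun_prop) ?_ ?_
  · refine tendsto_atTop_mono (fun ξ => ?_)
      (tendsto_atTop_add_const_right _ (-(C * |s|)) tendsto_id)
    simp only [id_eq]
    linarith [(abs_le.mp (hdev ξ)).1]
  · refine tendsto_atBot_mono (fun ξ => ?_)
      (tendsto_atBot_add_const_right _ (C * |s|) tendsto_id)
    simp only [id_eq]
    linarith [(abs_le.mp (hdev ξ)).2]

/-- `characteristicFoot a (x, s)` is the paper's `x_s⁻¹(x)`: the foot `ξ` of the characteristic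
`τ ↦ ξ + a ξ * τ` that passes through `x` at time `s` (a junk value where there is no such `ξ`). -/
noncomputable def characteristicFoot (a : ℝ → ℝ) (p : ℝ × ℝ) : ℝ :=
  invFun (fun ξ => ξ + a ξ * p.2) p.1

lemma characteristicFoot_add_mul {s : ℝ} (hinj : Injective fun ξ => ξ + a ξ * s) (ξ : ℝ) :
    characteristicFoot a (ξ + a ξ * s, s) = ξ :=
  leftInverse_invFun hinj ξ

lemma add_mul_characteristicFoot {s : ℝ} (hsurj : Surjective fun ξ => ξ + a ξ * s) (x : ℝ) :
    characteristicFoot a (x, s) + a (characteristicFoot a (x, s)) * s = x :=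
  invFun_eq (hsurj x)

lemma characteristicFoot_zero (x : ℝ) : characteristicFoot a (x, 0) = x := by
  simpa using characteristicFoot_add_mul (a := a) (s := 0) (fun _ _ h => by simpa using h) x

lemma contDiffAt_characteristicFoot (ha : ContDiff ℝ 1 a) {x s : ℝ}
    (hinj : ∀ᶠ τ in 𝓝 s, Injective fun ξ => ξ + a ξ * τ)
    (hsurj : Surjective fun ξ => ξ + a ξ * s)
    (hD : 1 + deriv a (characteristicFoot a (x, s)) * s ≠ 0) :
    ContDiffAt ℝ 1 (characteristicFoot a) (x, s) := by
  set ξ := characteristicFoot a (x, s)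
  set F : (ℝ × ℝ) × ℝ → ℝ := fun q => q.2 + a q.2 * q.1.2 - q.1.1 with hF_def
  have hF : ContDiffAt ℝ 1 F ((x, s), ξ) := by fun_prop
  have hFξ : HasFDerivAt (fun t => F ((x, s), t)) (fderiv ℝ F ((x, s), ξ) ∘L .inr ℝ (ℝ × ℝ) ℝ) ξ :=
    (hF.differentiableAt one_ne_zero).hasFDerivAt.comp ξ (hasFDerivAt_prodMk_right (x, s) ξ)
  have hFξ' : HasDerivAt (fun t => F ((x, s), t)) (1 + deriv a ξ * s) ξ :=
    ((hasDerivAt_id' ξ).add ((ha.differentiable one_ne_zero ξ).hasDerivAt.mul_const s)).sub_const x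
  have hinv : (fderiv ℝ F ((x, s), ξ) ∘L .inr ℝ (ℝ × ℝ) ℝ).IsInvertible := by
    rw [hFξ.unique hFξ'.hasFDerivAt]
    refine .of_inverse (g := (1 : ℝ →L[ℝ] ℝ).smulRight (1 + deriv a ξ * s)⁻¹) ?_ ?_ <;>
      ext <;> simp [hD]
  set ψ := hF.implicitFunction one_ne_zero hinv
  have hψ : ∀ᶠ p in 𝓝 (x, s), F (p, ψ p) = F ((x, s), ξ) :=
    hF.eventually_apply_implicitFunction one_ne_zero hinv
  have hinj' : ∀ᶠ p : ℝ × ℝ in 𝓝 (x, s), Injective fun ξ => ξ + a ξ * p.2 := by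
    rw [nhds_prod_eq]
    exact hinj.prod_inr _
  refine (hF.contDiffAt_implicitFunction one_ne_zero hinv).congr_of_eventuallyEq ?_
  filter_upwards [hψ, hinj'] with p hp hpinj
  have hchar : ψ p + a (ψ p) * p.2 = p.1 := by
    have := add_mul_characteristicFoot hsurj x
    simp only [hF_def] at hp
    linarith
  calc characteristicFoot a p = characteristicFoot a (ψ p + a (ψ p) * p.2, p.2) := by rw [hchar]
    _ = ψ p := characteristicFoot_add_mul hpinj _

lemma deriv_time_add_mul_deriv_space_of_add_mul_eq {φ : ℝ × ℝ → ℝ} {x s : ℝ}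
    (hφ : DifferentiableAt ℝ φ (x, s)) (ha : DifferentiableAt ℝ a (φ (x, s)))
    (hchar : ∀ᶠ q in 𝓝 (x, s), φ q + a (φ q) * q.2 = q.1)
    (hD : 1 + deriv a (φ (x, s)) * s ≠ 0) :
    deriv (fun τ => φ (x, τ)) s + a (φ (x, s)) * deriv (fun y => φ (y, s)) x = 0 := by
  have hg : HasDerivAt (fun τ => φ (x, τ)) (deriv (fun τ => φ (x, τ)) s) s :=
    (hφ.comp s (by fun_prop)).hasDerivAt
  have hk : HasDerivAt (fun y => φ (y, s)) (deriv (fun y => φ (y, s)) x) x :=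
    (hφ.comp x (by fun_prop)).hasDerivAt
  have htime : deriv (fun τ => φ (x, τ)) s * (1 + deriv a (φ (x, s)) * s) + a (φ (x, s)) = 0 := by
    have hline : ∀ᶠ τ in 𝓝 s, φ (x, τ) + a (φ (x, τ)) * τ = x :=
      ((continuous_const.prodMk continuous_id).tendsto s).eventually hchar
    have hchar_deriv : HasDerivAt (fun τ => φ (x, τ) + a (φ (x, τ)) * τ)
        (deriv (fun τ => φ (x, τ)) s +
          (deriv a (φ (x, s)) * deriv (fun τ => φ (x, τ)) s * s + a (φ (x, s)) * 1)) s :=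
      hg.add ((ha.hasDerivAt.comp s hg).mul (hasDerivAt_id' s))
    linear_combination hchar_deriv.unique ((hasDerivAt_const s x).congr_of_eventuallyEq hline)
  have hspace : deriv (fun y => φ (y, s)) x * (1 + deriv a (φ (x, s)) * s) = 1 := by
    have hline : ∀ᶠ y in 𝓝 x, φ (y, s) + a (φ (y, s)) * s = y :=
      ((continuous_id.prodMk continuous_const).tendsto x).eventually hchar
    have hchar_deriv : HasDerivAt (fun y => φ (y, s) + a (φ (y, s)) * s)
        (deriv (fun y => φ (y, s)) x + deriv a (φ (x, s)) * deriv (fun y => φ (y, s)) x * s) x :=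
      hk.add ((ha.hasDerivAt.comp x hk).mul_const s)
    linear_combination hchar_deriv.unique ((hasDerivAt_id x).congr_of_eventuallyEq hline)
  refine (mul_eq_zero.mp ?_).resolve_right hD
  linear_combination htime + a (φ (x, s)) * hspace

lemma deriv_comp_add_deriv_comp_eq_zero_of_transport {f h : ℝ → ℝ} {φ : ℝ × ℝ → ℝ} {x s : ℝ}
    (hf : DifferentiableAt ℝ f (h (φ (x, s)))) (hh : DifferentiableAt ℝ h (φ (x, s)))
    (hφ : DifferentiableAt ℝ φ (x, s))
    (htransport : deriv (fun τ => φ (x, τ)) s +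
      deriv f (h (φ (x, s))) * deriv (fun y => φ (y, s)) x = 0) :
    deriv (fun τ => h (φ (x, τ))) s + deriv (fun y => f (h (φ (y, s)))) x = 0 := by
  have hg : HasDerivAt (fun τ => φ (x, τ)) (deriv (fun τ => φ (x, τ)) s) s :=
    (hφ.comp s (by fun_prop)).hasDerivAt
  have hk : HasDerivAt (fun y => φ (y, s)) (deriv (fun y => φ (y, s)) x) x :=
    (hφ.comp x (by fun_prop)).hasDerivAt
  have hu_time : HasDerivAt (fun τ => h (φ (x, τ)))
      (deriv h (φ (x, s)) * deriv (fun τ => φ (x, τ)) s) s :=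
    hh.hasDerivAt.comp s hg
  have hflux : HasDerivAt (fun y => f (h (φ (y, s))))
      (deriv f (h (φ (x, s))) * (deriv h (φ (x, s)) * deriv (fun y => φ (y, s)) x)) x :=
    hf.hasDerivAt.comp x (hh.hasDerivAt.comp x hk)
  rw [hu_time.deriv, hflux.deriv]
  linear_combination deriv h (φ (x, s)) * htransport

end Characteristics

theorem stmt7_general (f h : ℝ → ℝ) (hf : ContDiff ℝ 2 f) (hh : ContDiff ℝ 1 h)
    (hsupp : HasCompactSupport h) (T : ℝ)
    (hpos : ∀ ξ : ℝ, ∀ s ∈ Set.Icc (0:ℝ) T,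
      0 < 1 + deriv (deriv f) (h ξ) * deriv h ξ * s) :
    ∃ u : ℝ × ℝ → ℝ,
      (∀ ξ : ℝ, ∀ s ∈ Set.Icc (0:ℝ) T, u (ξ + deriv f (h ξ) * s, s) = h ξ) ∧
      (∀ x : ℝ, u (x, 0) = h x) ∧
      ContDiffOn ℝ 1 u (Set.univ ×ˢ Set.Ioo (0:ℝ) T) ∧
      (∀ x : ℝ, ∀ s ∈ Set.Ioo (0:ℝ) T,
        deriv (fun τ => u (x, τ)) s + deriv (fun y => f (u (y, s))) x = 0) := by
  set a : ℝ → ℝ := fun ξ => deriv f (h ξ)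
  have hf' : ContDiff ℝ 1 (deriv f) := hf.deriv'
  have ha : ContDiff ℝ 1 a := hf'.comp hh
  have hderiv_a (ξ : ℝ) : deriv a ξ = deriv (deriv f) (h ξ) * deriv h ξ :=
    deriv_comp ξ (hf'.differentiable one_ne_zero _) (hh.differentiable one_ne_zero _)
  have hinj : ∀ s ∈ Icc 0 T, Injective fun ξ => ξ + a ξ * s := fun s hs =>
    (strictMono_add_mul_of_one_add_deriv_mul_pos (ha.differentiable one_ne_zero)
      fun ξ => by rw [hderiv_a]; exact hpos ξ s hs).injective
  have hsurj : ∀ s, Surjective fun ξ => ξ + a ξ * s :=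
    surjective_add_mul_of_isBounded_range ha.continuous <| by
      rw [show range a = deriv f '' range h from range_comp (deriv f) h]
      exact ((hsupp.isCompact_range hh.continuous).image hf'.continuous).isBounded
  have hD : ∀ ξ, ∀ s ∈ Ioo 0 T, 1 + deriv a ξ * s ≠ 0 := fun ξ s hs => by
    rw [hderiv_a]; exact (hpos ξ s (Ioo_subset_Icc_self hs)).ne'
  have hfoot : ContDiffOn ℝ 1 (characteristicFoot a) (univ ×ˢ Ioo 0 T) := fun p hp =>
    (contDiffAt_characteristicFoot ha
      (eventually_of_mem (Ioo_mem_nhds hp.2.1 hp.2.2) fun τ hτ => hinj τ (Ioo_subset_Icc_self hτ))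
      (hsurj p.2) (hD _ p.2 hp.2)).contDiffWithinAt
  refine ⟨fun p => h (characteristicFoot a p),
    fun ξ s hs => congrArg h (characteristicFoot_add_mul (hinj s hs) ξ),
    fun x => congrArg h (characteristicFoot_zero x), hh.comp_contDiffOn hfoot, fun x s hs => ?_⟩
  have hfoot_diff : DifferentiableAt ℝ (characteristicFoot a) (x, s) :=
    ((hfoot (x, s) ⟨mem_univ x, hs⟩).contDiffAt
      ((isOpen_univ.prod isOpen_Ioo).mem_nhds ⟨mem_univ x, hs⟩)).differentiableAt one_ne_zero
  exact deriv_comp_add_deriv_comp_eq_zero_of_transport (hf.differentiable two_ne_zero _)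
    (hh.differentiable one_ne_zero _) hfoot_diff
    (deriv_time_add_mul_deriv_space_of_add_mul_eq hfoot_diff (ha.differentiable one_ne_zero _)
      (.of_forall fun q => add_mul_characteristicFoot (hsurj q.2) q.1) (hD _ s hs))

/-- If `1 + f''(h(ξ))·h'(ξ)·s > 0` for all `ξ` and `s ∈ [0,T]`, then the formula
`u(ξ + f'(h(ξ))·s, s) = h(ξ)` defines a `C¹` classical solution of `u_t + f(u)_x = 0`
on `ℝ × (0,T)` with initial datum `h`. -/
theorem stmt7 (f h : ℝ → ℝ) (hf : ContDiff ℝ 2 f) (hh : ContDiff ℝ 1 h)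
    (hsupp : HasCompactSupport h) (T : ℝ) (hT : 0 < T)
    (hpos : ∀ ξ : ℝ, ∀ s ∈ Set.Icc (0:ℝ) T,
      0 < 1 + deriv (deriv f) (h ξ) * deriv h ξ * s) :
    ∃ u : ℝ × ℝ → ℝ,
      (∀ ξ : ℝ, ∀ s ∈ Set.Icc (0:ℝ) T, u (ξ + deriv f (h ξ) * s, s) = h ξ) ∧
      (∀ x : ℝ, u (x, 0) = h x) ∧
      ContDiffOn ℝ 1 u (Set.univ ×ˢ Set.Ioo (0:ℝ) T) ∧
      (∀ x : ℝ, ∀ s ∈ Set.Ioo (0:ℝ) T,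
        deriv (fun τ => u (x, τ)) s + deriv (fun y => f (u (y, s))) x = 0) :=
  stmt7_general f h hf hh hsupp T hpos
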